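/- arXiv:2603.00419 — 4 statements merged into one kernel-verified Lean document; each statement's English description precedes it below -/
import Mathlib

section
/- Let P̂ ∈ ℝ^{n×n} be symmetric positive definite and let P, A₂ᵀA₂ be symmetric with P - A₂ᵀA₂ positive definite. If y ∈ ℂⁿ is nonzero and λ ∈ ℂ satisfies (P̂ y*) λ² - (y*(P̂ - P)y) λ - y* A₂ᵀA₂ y = 0 (i.e., λ² - (y*(P̂-P)y)/(y*P̂y) λ - (y*A₂ᵀA₂y)/(y*P̂y) = 0), and if both 2P̂ - P - A₂ᵀA₂ and P̂ - A₂ᵀA₂ are positive definite, then |λ| < 1. -/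
open Matrix

/-! Write `u = y*(P - A₂ᵀA₂)y`, `v = y*(2P̂ - P - A₂ᵀA₂)y` and `s = y*A₂ᵀA₂y`. Positive
(semi)definiteness over `ℝ` persists over `ℂ`, so `u, v > 0` and `s ≥ 0` are real, and the
quadratic reads `((u + v)/2 + s) λ² = ((v - u)/2) λ + s`. As `|v - u| < u + v`, the modulus of
the leading coefficient exceeds the sum of the moduli of the other two; for `|λ| ≥ 1` this is
impossible, since `|α| |λ|² = |β λ + γ| ≤ (|β| + |γ|) |λ|²`. -/

open scoped ComplexOrder

namespace Matrix

variable {𝕜 n : Type*} [RCLike 𝕜] [Fintype n]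

open scoped MatrixOrder Matrix.Norms.L2Operator in
theorem PosSemidef.map_ofReal {M : Matrix n n ℝ} (hM : M.PosSemidef) :
    (M.map (algebraMap ℝ 𝕜)).PosSemidef := by
  classical
  obtain ⟨B, rfl⟩ := CStarAlgebra.nonneg_iff_eq_star_mul_self.mp hM.nonneg
  rw [Matrix.map_mul, star_eq_conjTranspose, conjTranspose_map _ (fun x => by simp)]
  exact posSemidef_conjTranspose_mul_self _

theorem PosDef.map_ofReal {M : Matrix n n ℝ} (hM : M.PosDef) :
    (M.map (algebraMap ℝ 𝕜)).PosDef := by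
  classical
  rw [hM.posSemidef.map_ofReal.posDef_iff_det_ne_zero, ← RingHom.mapMatrix_apply,
    ← RingHom.map_det]
  simpa using hM.det_pos.ne'

end Matrix

theorem norm_lt_one_of_mul_sq_eq {K : Type*} [NormedDivisionRing K] {a b c x : K}
    (habc : ‖b‖ + ‖c‖ < ‖a‖) (h : a * x ^ 2 = b * x + c) : ‖x‖ < 1 := by
  by_contra! hx
  have hx2 : ‖x‖ ≤ ‖x‖ ^ 2 := by nlinarith
  have : ‖a‖ * ‖x‖ ^ 2 ≤ (‖b‖ + ‖c‖) * ‖x‖ ^ 2 := calc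
    ‖a‖ * ‖x‖ ^ 2 = ‖b * x + c‖ := by rw [← h, norm_mul, norm_pow]
    _ ≤ ‖b‖ * ‖x‖ + ‖c‖ := (norm_add_le _ _).trans_eq (by rw [norm_mul])
    _ ≤ (‖b‖ + ‖c‖) * ‖x‖ ^ 2 := by nlinarith [norm_nonneg b, norm_nonneg c]
  exact this.not_gt (mul_lt_mul_of_pos_right habc (by positivity))

theorem RCLike.norm_sub_add_norm_lt_norm {𝕜 : Type*} [RCLike 𝕜] {a b c : 𝕜}
    (hbc : 0 < b - c) (habc : 0 < 2 * a - b - c) (hc : 0 ≤ c) : ‖a - b‖ + ‖c‖ < ‖a‖ := by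
  obtain ⟨u, hu, hbc⟩ := RCLike.pos_iff_exists_ofReal.mp hbc
  obtain ⟨v, hv, habc⟩ := RCLike.pos_iff_exists_ofReal.mp habc
  obtain ⟨s, hs, rfl⟩ := RCLike.nonneg_iff_exists_ofReal.mp hc
  have ha : a = ((u + v) / 2 + s : ℝ) := by push_cast; linear_combination -(hbc + habc) / 2
  have hab : a - b = ((v - u) / 2 : ℝ) := by push_cast; linear_combination (hbc - habc) / 2
  have huv : |(v - u) / 2| < (u + v) / 2 := abs_lt.mpr ⟨by linarith, by linarith⟩
  rw [hab, ha, RCLike.norm_ofReal, RCLike.norm_ofReal, RCLike.norm_ofReal, abs_of_nonneg hs,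
    abs_of_pos (by positivity : 0 < (u + v) / 2 + s)]
  linarith

theorem stmt_1_general {n q : ℕ} (Phat P : Matrix (Fin n) (Fin n) ℝ)
    (A₂ : Matrix (Fin q) (Fin n) ℝ)
    (hPA : (P - A₂ᵀ * A₂).PosDef)
    (h1 : (2 • Phat - P - A₂ᵀ * A₂).PosDef)
    (y : Fin n → ℂ) (hy : y ≠ 0) (lam : ℂ)
    (hquad : (star y ⬝ᵥ ((Phat.map (Complex.ofReal)) *ᵥ y)) * lam ^ 2
        - (star y ⬝ᵥ (((Phat - P).map (Complex.ofReal)) *ᵥ y)) * lam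
        - (star y ⬝ᵥ (((A₂ᵀ * A₂).map (Complex.ofReal)) *ᵥ y)) = 0) :
    ‖lam‖ < 1 := by
  have hu := (hPA.map_ofReal (𝕜 := ℂ)).dotProduct_mulVec_pos hy
  have hv := (h1.map_ofReal (𝕜 := ℂ)).dotProduct_mulVec_pos hy
  have hs :=
    ((posSemidef_conjTranspose_mul_self A₂).map_ofReal (𝕜 := ℂ)).dotProduct_mulVec_nonneg y
  rw [conjTranspose_eq_transpose_of_trivial] at hs
  simp only [Complex.coe_algebraMap, two_nsmul, Matrix.map_sub _ Complex.ofReal_sub,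
    Matrix.map_add _ Complex.ofReal_add, sub_mulVec, add_mulVec, dotProduct_sub,
    dotProduct_add] at hu hv hs hquad
  refine norm_lt_one_of_mul_sq_eq
    (RCLike.norm_sub_add_norm_lt_norm hu (by linear_combination hv) hs) ?_
  linear_combination hquad

/-- If `P̂ ≻ 0`, `P - A₂ᵀA₂ ≻ 0`, `2P̂ - P - A₂ᵀA₂ ≻ 0` and `P̂ - A₂ᵀA₂ ≻ 0`, then any
complex root `λ` of the quadratic `(y*P̂y) λ² - (y*(P̂-P)y) λ - (y*A₂ᵀA₂y) = 0`
(for a nonzero `y ∈ ℂⁿ`) satisfies `|λ| < 1`. -/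
theorem stmt_1 {n q : ℕ} (Phat P : Matrix (Fin n) (Fin n) ℝ)
    (A₂ : Matrix (Fin q) (Fin n) ℝ)
    (hPhatSym : Phat.IsSymm) (hPSym : P.IsSymm)
    (hPhat : Phat.PosDef)
    (hPA : (P - A₂ᵀ * A₂).PosDef)
    (h1 : (2 • Phat - P - A₂ᵀ * A₂).PosDef)
    (h2 : (Phat - A₂ᵀ * A₂).PosDef)
    (y : Fin n → ℂ) (hy : y ≠ 0) (lam : ℂ)
    (hquad : (star y ⬝ᵥ ((Phat.map (Complex.ofReal)) *ᵥ y)) * lam ^ 2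
        - (star y ⬝ᵥ (((Phat - P).map (Complex.ofReal)) *ᵥ y)) * lam
        - (star y ⬝ᵥ (((A₂ᵀ * A₂).map (Complex.ofReal)) *ᵥ y)) = 0) :
    ‖lam‖ < 1 :=
  stmt_1_general Phat P A₂ hPA h1 y hy lam hquad
end

section
/- Consider the block matrix 𝒜 = [[I, A₁, 0], [0, P, A₂ᵀ], [0, A₂, I]] with A₁ ∈ ℝ^{p×n} of full column rank, P = A₁ᵀA₁, A₂ ∈ ℝ^{q×n}, and the block diagonal preconditioner ℳ₁ = diag(I_p, P̂, I_q) with P̂ symmetric positive definite. If μ = 1 is an eigenvalue of ℳ₁⁻¹𝒜 with eigenvector (x; y; z), and P̂ ≠ P arbitrary, then A₁y = 0 forces y = 0, and the eigenvector satisfies y = 0 and A₂ᵀz = 0; consequently the geometric multiplicity of the eigenvalue 1 of ℳ₁⁻¹𝒜 equals p + q - rank(A₂). -/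
/-!
As `ℳ₁` is invertible, `ℳ₁⁻¹𝒜ν = ν` iff `(𝒜 - ℳ₁)ν = 0`. For `ν = (x; y; z)` the first block row
of `𝒜 - ℳ₁` reads `A₁y = 0`, so `y = 0` by full column rank, and then the middle row reduces to
`A₂ᵀz = 0` whatever `P̂` is, while `x` is free. The eigenspace is therefore `ℝᵖ × 𝒩(A₂ᵀ)`, of
dimension `p + (q - rank A₂)`.
-/

namespace Matrix

variable {K : Type*} [Field K] {m k l o : Type*}

theorem ker_mulVecLin_eq_bot_of_rank_eq_card [Fintype k] {A : Matrix m k K}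
    (hA : A.rank = Fintype.card k) : LinearMap.ker A.mulVecLin = ⊥ := by
  rw [← Submodule.finrank_eq_zero]
  have := A.mulVecLin.finrank_range_add_finrank_ker
  rw [Module.finrank_fintype_fun_eq_card] at this
  change A.rank + _ = _ at this
  omega

theorem ker_mulVecLin_nonsing_inv_mul_sub_one [Fintype m] [DecidableEq m] {A M : Matrix m m K}
    (hM : IsUnit M.det) :
    LinearMap.ker (M⁻¹ * A - 1).mulVecLin = LinearMap.ker (A - M).mulVecLin := by
  have hfactor : M⁻¹ * A - 1 = M⁻¹ * (A - M) := by
    rw [Matrix.mul_sub, nonsing_inv_mul _ hM]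
  have hinj : Function.Injective M⁻¹.mulVec :=
    mulVec_injective_of_det_ne_zero (isUnit_nonsing_inv_det M hM).ne_zero
  ext ν
  simp only [hfactor, LinearMap.mem_ker, mulVecLin_apply, ← mulVec_mulVec]
  exact hinj.eq_iff' (mulVec_zero _)

variable (m k) in
def zeroMiddleKer [Fintype l] (C : Matrix o l K) : Submodule K (m ⊕ (k ⊕ l) → K) :=
  LinearMap.ker ((LinearMap.funLeft K K (Sum.inr ∘ Sum.inl)).prod
    (C.mulVecLin ∘ₗ LinearMap.funLeft K K (Sum.inr ∘ Sum.inr)))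

theorem mem_zeroMiddleKer [Fintype l] {C : Matrix o l K} {ν : m ⊕ (k ⊕ l) → K} :
    ν ∈ zeroMiddleKer m k C ↔
      (fun j ↦ ν (Sum.inr (Sum.inl j))) = 0 ∧ C *ᵥ (fun i ↦ ν (Sum.inr (Sum.inr i))) = 0 :=
  Prod.mk_eq_zero

variable (m k) in
def zeroMiddleKerEquiv [Fintype l] (C : Matrix o l K) :
    zeroMiddleKer m k C ≃ₗ[K] (m → K) × LinearMap.ker C.mulVecLin where
  toFun ν := (fun i ↦ ν.1 (Sum.inl i), ⟨fun i ↦ ν.1 (Sum.inr (Sum.inr i)),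
    (mem_zeroMiddleKer.mp ν.2).2⟩)
  invFun xz := ⟨Sum.elim xz.1 (Sum.elim 0 xz.2), mem_zeroMiddleKer.mpr ⟨rfl, xz.2.2⟩⟩
  map_add' _ _ := rfl
  map_smul' _ _ := rfl
  left_inv := by
    rintro ⟨ν, hν⟩
    have hmid := congrFun (mem_zeroMiddleKer.mp hν).1
    ext (i | j | i)
    · rfl
    · exact (hmid j).symm
    · rfl
  right_inv _ := rfl

variable (m k) in
theorem finrank_zeroMiddleKer_add_rank [Fintype m] [Fintype l] (C : Matrix o l K) :
    Module.finrank K (zeroMiddleKer m k C) + C.rank = Fintype.card m + Fintype.card l := by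
  rw [(zeroMiddleKerEquiv m k C).finrank_eq, Module.finrank_prod,
    Module.finrank_fintype_fun_eq_card, add_assoc, add_comm _ C.rank]
  congr 1
  have := C.mulVecLin.finrank_range_add_finrank_ker
  rwa [Module.finrank_fintype_fun_eq_card] at this

theorem ker_mulVecLin_fromBlocks_sub [Fintype m] [Fintype k] [Fintype l] [DecidableEq m]
    [DecidableEq l] {A : Matrix m k K} (hA : ∀ y, A *ᵥ y = 0 → y = 0) (P Q : Matrix k k K)
    (B : Matrix k l K) (C : Matrix l k K) :
    LinearMap.ker (fromBlocks 1 (fromCols A 0) 0 (fromBlocks P B C 1) -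
      fromBlocks 1 0 0 (fromBlocks Q 0 0 1)).mulVecLin = zeroMiddleKer m k B := by
  ext ν
  obtain ⟨x, y, z, rfl⟩ : ∃ x y z, ν = Sum.elim x (Sum.elim y z) :=
    ⟨ν ∘ Sum.inl, ν ∘ Sum.inr ∘ Sum.inl, ν ∘ Sum.inr ∘ Sum.inr, by ext (i | j | i) <;> rfl⟩
  rw [LinearMap.mem_ker, mulVecLin_apply, mem_zeroMiddleKer, sub_mulVec, sub_eq_zero]
  simp only [fromBlocks_mulVec, Sum.elim_comp_inl, Sum.elim_comp_inr, fromCols_mulVec_sumElim,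
    zero_mulVec, one_mulVec, add_zero, zero_add, Sum.elim_eq_iff, add_eq_left,
    add_eq_right, Sum.elim_inl, Sum.elim_inr]
  constructor
  · rintro ⟨hAy, hmid, -⟩
    obtain rfl := hA y hAy
    exact ⟨rfl, by simpa using hmid⟩
  · rintro ⟨hy, hBz⟩
    obtain rfl : y = 0 := hy
    simp [hBz]

end Matrix

open Matrix

/-- For `𝒜 = [[I,A₁,0],[0,P,A₂ᵀ],[0,A₂,I]]` with `A₁` of full column rank, `P = A₁ᵀA₁`, and
`ℳ₁ = diag(I, P̂, I)` with `P̂ ≻ 0`: `A₁y = 0` forces `y = 0`; every eigenvector of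
`ℳ₁⁻¹𝒜` for the eigenvalue `1` has middle block `0` and last block in `𝒩(A₂ᵀ)`;
and the geometric multiplicity of the eigenvalue `1` equals `p + q - rank A₂`. -/
theorem stmt_9 {p n q : ℕ} (A₁ : Matrix (Fin p) (Fin n) ℝ)
    (A₂ : Matrix (Fin q) (Fin n) ℝ) (Phat : Matrix (Fin n) (Fin n) ℝ)
    (hA₁ : A₁.rank = n) (hPhat : Phat.PosDef)
    (𝒜 ℳ₁ : Matrix (Fin p ⊕ (Fin n ⊕ Fin q)) (Fin p ⊕ (Fin n ⊕ Fin q)) ℝ)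
    (h𝒜 : 𝒜 = fromBlocks 1 (fromCols A₁ 0) 0 (fromBlocks (A₁ᵀ * A₁) A₂ᵀ A₂ 1))
    (hℳ : ℳ₁ = fromBlocks 1 0 0 (fromBlocks Phat 0 0 1)) :
    (∀ y : Fin n → ℝ, A₁ *ᵥ y = 0 → y = 0) ∧
    (∀ ν : Fin p ⊕ (Fin n ⊕ Fin q) → ℝ, (ℳ₁⁻¹ * 𝒜) *ᵥ ν = ν →
      (∀ j, ν (Sum.inr (Sum.inl j)) = 0) ∧
        A₂ᵀ *ᵥ (fun k => ν (Sum.inr (Sum.inr k))) = 0) ∧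
    Module.finrank ℝ (LinearMap.ker (ℳ₁⁻¹ * 𝒜 - 1).mulVecLin) = p + q - A₂.rank := by
  have hinj : ∀ y : Fin n → ℝ, A₁ *ᵥ y = 0 → y = 0 :=
    ker_mulVecLin_eq_bot_iff.mp <|
      ker_mulVecLin_eq_bot_of_rank_eq_card (by rw [hA₁, Fintype.card_fin])
  have hdet : IsUnit ℳ₁.det := by
    rw [hℳ, det_fromBlocks_zero₂₁, det_one, one_mul, det_fromBlocks_zero₂₁, det_one, mul_one]
    exact hPhat.det_pos.ne'.isUnit
  have hker : LinearMap.ker (ℳ₁⁻¹ * 𝒜 - 1).mulVecLin = zeroMiddleKer (Fin p) (Fin n) A₂ᵀ := by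
    rw [ker_mulVecLin_nonsing_inv_mul_sub_one hdet, h𝒜, hℳ, ker_mulVecLin_fromBlocks_sub hinj]
  refine ⟨hinj, fun ν hν ↦ ?_, ?_⟩
  · have hmem : ν ∈ zeroMiddleKer (Fin p) (Fin n) A₂ᵀ := by
      rw [← hker, LinearMap.mem_ker, mulVecLin_apply, sub_mulVec, hν, one_mulVec, sub_self]
    obtain ⟨hy, hz⟩ := mem_zeroMiddleKer.mp hmem
    exact ⟨congrFun hy, hz⟩
  · have hdim := finrank_zeroMiddleKer_add_rank (Fin p) (Fin n) A₂ᵀ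
    rw [rank_transpose, Fintype.card_fin, Fintype.card_fin] at hdim
    rw [hker]
    omega
end

section
/- Let 𝒜 = [[I, A₁, 0], [0, P, A₂ᵀ], [0, A₂, I]] and ℳ₁ = diag(I, P̂, I) with P̂ symmetric positive definite and A₁ of full column rank. If (μ, (x; y; z)) is an eigenpair of ℳ₁⁻¹𝒜 with μ ≠ 1, then y ≠ 0, x = (μ-1)⁻¹ A₁ y, z = (μ-1)⁻¹ A₂ y, and y satisfies (1-μ)(P - μP̂)y = A₂ᵀA₂ y. -/
open Matrix

/-! Since `det ℳ₁ = det P̂ > 0`, the eigen-equation is the generalized one `𝒜ν = μℳ₁ν`, whose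
block rows read `x + A₁y = μx`, `Py + A₂ᵀz = μP̂y` and `A₂y + z = μz`. For `μ ≠ 1` the outer rows
solve for `x` and `z` in terms of `y`, so `y = 0` would force `ν = 0`; substituting `z` into the
middle row gives the reduced equation for `y`. -/

theorem Sum.smul_elim {M α β γ : Type*} [SMul M γ] (c : M) (f : α → γ) (g : β → γ) :
    c • Sum.elim f g = Sum.elim (c • f) (c • g) := by
  ext (_ | _) <;> rfl

section BlockSystem

variable {R : Type*} [CommRing R] {p n q : Type*} [Fintype p] [Fintype n] [Fintype q]
  [DecidableEq p] [DecidableEq q]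

def saddleMatrix (A₁ : Matrix p n R) (A₂ : Matrix q n R) : Matrix (p ⊕ (n ⊕ q)) (p ⊕ (n ⊕ q)) R :=
  fromBlocks 1 (fromCols A₁ 0) 0 (fromBlocks (A₁ᵀ * A₁) A₂ᵀ A₂ 1)

def blockPreconditioner (Phat : Matrix n n R) : Matrix (p ⊕ (n ⊕ q)) (p ⊕ (n ⊕ q)) R :=
  fromBlocks 1 0 0 (fromBlocks Phat 0 0 1)

theorem saddleMatrix_mulVec_sumElim (A₁ : Matrix p n R) (A₂ : Matrix q n R)
    (x : p → R) (y : n → R) (z : q → R) :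
    saddleMatrix A₁ A₂ *ᵥ Sum.elim x (Sum.elim y z) =
      Sum.elim (x + A₁ *ᵥ y) (Sum.elim ((A₁ᵀ * A₁) *ᵥ y + A₂ᵀ *ᵥ z) (A₂ *ᵥ y + z)) := by
  simp [saddleMatrix, fromBlocks_mulVec]

theorem blockPreconditioner_mulVec_sumElim (Phat : Matrix n n R)
    (x : p → R) (y : n → R) (z : q → R) :
    blockPreconditioner Phat *ᵥ Sum.elim x (Sum.elim y z) =
      Sum.elim x (Sum.elim (Phat *ᵥ y) z) := by
  simp [blockPreconditioner, fromBlocks_mulVec]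

theorem det_blockPreconditioner [DecidableEq n] (Phat : Matrix n n R) :
    (blockPreconditioner (p := p) (q := q) Phat).det = Phat.det := by
  simp [blockPreconditioner, det_fromBlocks_zero₂₁]

end BlockSystem

theorem Matrix.mulVec_eq_smul_mulVec_of_inv_mul_mulVec {R n : Type*} [CommRing R] [Fintype n]
    [DecidableEq n] {M A : Matrix n n R} (hM : IsUnit M.det) {μ : R} {v : n → R}
    (h : (M⁻¹ * A) *ᵥ v = μ • v) : A *ᵥ v = μ • (M *ᵥ v) := by
  rw [← mulVec_smul, ← h, mulVec_mulVec, ← Matrix.mul_assoc, mul_nonsing_inv _ hM, Matrix.one_mul]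

theorem eq_inv_sub_one_smul_of_add_eq_smul {K V : Type*} [Field K] [AddCommGroup V] [Module K V]
    {μ : K} (hμ : μ ≠ 1) {v w : V} (h : v + w = μ • v) : v = (μ - 1)⁻¹ • w := by
  rw [eq_inv_smul_iff₀ (sub_ne_zero.mpr hμ), sub_smul, one_smul, ← h, add_sub_cancel_left]

theorem one_sub_smul_mulVec_eq_transpose_mul_mulVec {K n q : Type*} [Field K] [Fintype n]
    [Fintype q] {P Phat : Matrix n n K} {B : Matrix q n K} {μ : K} (hμ : μ ≠ 1)
    {y : n → K} {z : q → K}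
    (hz : z = (μ - 1)⁻¹ • (B *ᵥ y)) (h : P *ᵥ y + Bᵀ *ᵥ z = μ • (Phat *ᵥ y)) :
    (1 - μ) • ((P - μ • Phat) *ᵥ y) = (Bᵀ * B) *ᵥ y := by
  have hBz : (μ - 1) • (Bᵀ *ᵥ z) = (Bᵀ * B) *ᵥ y := by
    rw [hz, mulVec_smul, smul_smul, mul_inv_cancel₀ (sub_ne_zero.mpr hμ), one_smul, mulVec_mulVec]
  rw [← hBz, sub_mulVec, smul_mulVec, eq_sub_of_add_eq' h]
  module

theorem stmt_10_general {p n q : ℕ} (A₁ : Matrix (Fin p) (Fin n) ℝ)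
    (A₂ : Matrix (Fin q) (Fin n) ℝ) (Phat : Matrix (Fin n) (Fin n) ℝ)
    (hPhat : Phat.PosDef)
    (𝒜 ℳ₁ : Matrix (Fin p ⊕ (Fin n ⊕ Fin q)) (Fin p ⊕ (Fin n ⊕ Fin q)) ℝ)
    (h𝒜 : 𝒜 = fromBlocks 1 (fromCols A₁ 0) 0 (fromBlocks (A₁ᵀ * A₁) A₂ᵀ A₂ 1))
    (hℳ : ℳ₁ = fromBlocks 1 0 0 (fromBlocks Phat 0 0 1))
    (μ : ℝ) (hμ : μ ≠ 1) (x : Fin p → ℝ) (y : Fin n → ℝ) (z : Fin q → ℝ)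
    (hν : Sum.elim x (Sum.elim y z) ≠ 0)
    (heig : (ℳ₁⁻¹ * 𝒜) *ᵥ Sum.elim x (Sum.elim y z) = μ • Sum.elim x (Sum.elim y z)) :
    y ≠ 0 ∧ x = (μ - 1)⁻¹ • (A₁ *ᵥ y) ∧ z = (μ - 1)⁻¹ • (A₂ *ᵥ y) ∧
      (1 - μ) • ((A₁ᵀ * A₁ - μ • Phat) *ᵥ y) = (A₂ᵀ * A₂) *ᵥ y := by
  change 𝒜 = saddleMatrix A₁ A₂ at h𝒜
  change ℳ₁ = blockPreconditioner Phat at hℳ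
  subst h𝒜 hℳ
  have hdet : IsUnit (blockPreconditioner (p := Fin p) (q := Fin q) Phat).det := by
    rw [det_blockPreconditioner]
    exact hPhat.det_pos.ne'.isUnit
  have hsys := mulVec_eq_smul_mulVec_of_inv_mul_mulVec hdet heig
  simp only [saddleMatrix_mulVec_sumElim, blockPreconditioner_mulVec_sumElim, Sum.smul_elim,
    Sum.elim_eq_iff] at hsys
  obtain ⟨hrow₁, hrow₂, hrow₃⟩ := hsys
  have hx := eq_inv_sub_one_smul_of_add_eq_smul hμ hrow₁
  have hz := eq_inv_sub_one_smul_of_add_eq_smul hμ ((add_comm _ _).trans hrow₃)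
  refine ⟨?_, hx, hz, one_sub_smul_mulVec_eq_transpose_mul_mulVec hμ hz hrow₂⟩
  rintro rfl
  simp [hx, hz] at hν

/-- If `(μ, (x; y; z))` is an eigenpair of `ℳ₁⁻¹𝒜` with `μ ≠ 1`, then `y ≠ 0`,
`x = (μ-1)⁻¹ A₁y`, `z = (μ-1)⁻¹ A₂y`, and `(1-μ)(P - μP̂)y = A₂ᵀA₂ y`. -/
theorem stmt_10 {p n q : ℕ} (A₁ : Matrix (Fin p) (Fin n) ℝ)
    (A₂ : Matrix (Fin q) (Fin n) ℝ) (Phat : Matrix (Fin n) (Fin n) ℝ)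
    (hA₁ : A₁.rank = n) (hPhat : Phat.PosDef)
    (𝒜 ℳ₁ : Matrix (Fin p ⊕ (Fin n ⊕ Fin q)) (Fin p ⊕ (Fin n ⊕ Fin q)) ℝ)
    (h𝒜 : 𝒜 = fromBlocks 1 (fromCols A₁ 0) 0 (fromBlocks (A₁ᵀ * A₁) A₂ᵀ A₂ 1))
    (hℳ : ℳ₁ = fromBlocks 1 0 0 (fromBlocks Phat 0 0 1))
    (μ : ℝ) (hμ : μ ≠ 1) (x : Fin p → ℝ) (y : Fin n → ℝ) (z : Fin q → ℝ)
    (hν : Sum.elim x (Sum.elim y z) ≠ 0)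
    (heig : (ℳ₁⁻¹ * 𝒜) *ᵥ Sum.elim x (Sum.elim y z) = μ • Sum.elim x (Sum.elim y z)) :
    y ≠ 0 ∧ x = (μ - 1)⁻¹ • (A₁ *ᵥ y) ∧ z = (μ - 1)⁻¹ • (A₂ *ᵥ y) ∧
      (1 - μ) • ((A₁ᵀ * A₁ - μ • Phat) *ᵥ y) = (A₂ᵀ * A₂) *ᵥ y :=
  stmt_10_general A₁ A₂ Phat hPhat 𝒜 ℳ₁ h𝒜 hℳ μ hμ x y z hν heig
end

section
/- For each inexact block-splitting preconditioned matrix ℳᵢ⁻¹𝒜 (i = 1,2,3,4), which has block structure [[I_p, Ψ], [0, Φ]] with Φ of size (n+q)×(n+q), the minimal polynomial has degree at most n + q + 1; consequently GMRES applied to the preconditioned system terminates in at most n + q + 1 iterations in exact arithmetic. -/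
/-!
An upper block-triangular matrix `[[A, B], [0, D]]` is annihilated by `μ_A · μ_D`, since the
first factor kills the top-left block of its value and the second the bottom-right one; for
`A = 1` this is a polynomial of degree at most `1 + dim D`. If `T` is invertible, the constant
coefficient of its minimal polynomial `μ` is nonzero, so `μ(T) = 0` expresses `T⁻¹` as a
polynomial in `T` of degree `< deg μ`: the solution `T⁻¹ c` lies in the Krylov subspace
spanned by `c, T c, …, T^(deg μ - 1) c`.
-/

open Matrix Polynomial

namespace Matrix

section BlockTriangular

variable {R m l : Type*} [CommRing R] [Fintype m] [Fintype l] [DecidableEq m] [DecidableEq l]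
  (A : Matrix m m R) (B : Matrix m l R) (D : Matrix l l R)

theorem exists_fromBlocks_zero₂₁_pow (k : ℕ) :
    ∃ B', fromBlocks A B 0 D ^ k = fromBlocks (A ^ k) B' 0 (D ^ k) := by
  induction k with
  | zero => exact ⟨0, by simp [fromBlocks_one]⟩
  | succ k ih =>
    obtain ⟨B', hB'⟩ := ih
    exact ⟨A ^ k * B + B' * D, by simp [pow_succ, hB', fromBlocks_multiply]⟩

theorem exists_aeval_fromBlocks_zero₂₁ (f : R[X]) :
    ∃ B', aeval (fromBlocks A B 0 D) f = fromBlocks (aeval A f) B' 0 (aeval D f) := by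
  induction f using Polynomial.induction_on' with
  | add f g hf hg =>
    obtain ⟨Bf, hBf⟩ := hf
    obtain ⟨Bg, hBg⟩ := hg
    exact ⟨Bf + Bg, by simp [hBf, hBg, fromBlocks_add]⟩
  | monomial k a =>
    obtain ⟨B', hB'⟩ := exists_fromBlocks_zero₂₁_pow A B D k
    exact ⟨a • B', by simp [aeval_monomial, Algebra.algebraMap_eq_smul_one, hB', fromBlocks_smul]⟩

theorem aeval_fromBlocks_zero₂₁_mul_eq_zero {f g : R[X]} (hf : aeval A f = 0)
    (hg : aeval D g = 0) : aeval (fromBlocks A B 0 D) (f * g) = 0 := by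
  obtain ⟨Bf, hBf⟩ := exists_aeval_fromBlocks_zero₂₁ A B D f
  obtain ⟨Bg, hBg⟩ := exists_aeval_fromBlocks_zero₂₁ A B D g
  simp [hBf, hBg, hf, hg, fromBlocks_multiply]

end BlockTriangular

section Field

variable {K m l : Type*} [Field K] [Fintype m] [Fintype l] [DecidableEq m] [DecidableEq l]

theorem natDegree_minpoly_le_card (D : Matrix l l K) :
    (minpoly K D).natDegree ≤ Fintype.card l :=
  (natDegree_le_of_dvd (minpoly_dvd_charpoly D) D.charpoly_monic.ne_zero).trans
    D.charpoly_natDegree_eq_dim.le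

theorem natDegree_minpoly_fromBlocks_zero₂₁_le (A : Matrix m m K) (B : Matrix m l K)
    (D : Matrix l l K) :
    (minpoly K (fromBlocks A B 0 D)).natDegree ≤
      (minpoly K A).natDegree + (minpoly K D).natDegree := by
  have hmonic := (minpoly.monic A.isIntegral).mul (minpoly.monic D.isIntegral)
  have hann := aeval_fromBlocks_zero₂₁_mul_eq_zero A B D (minpoly.aeval K A) (minpoly.aeval K D)
  exact (natDegree_le_of_dvd (minpoly.dvd K _ hann) hmonic.ne_zero).trans natDegree_mul_le

theorem natDegree_minpoly_fromBlocks_one_zero_le (B : Matrix m l K) (D : Matrix l l K) :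
    (minpoly K (fromBlocks (1 : Matrix m m K) B 0 D)).natDegree ≤ Fintype.card l + 1 := by
  have hone : (minpoly K (1 : Matrix m m K)).natDegree ≤ 1 :=
    natDegree_le_of_dvd (minpoly.dvd K _ (by simp)) (X_sub_C_ne_zero 1) |>.trans
      (natDegree_X_sub_C_le 1)
  have := natDegree_minpoly_fromBlocks_zero₂₁_le (1 : Matrix m m K) B D
  have := natDegree_minpoly_le_card D
  omega

def krylovSubspace (T : Matrix m m K) (c : m → K) (N : ℕ) : Submodule K (m → K) :=
  Submodule.span K (Set.range fun k : Fin N => T ^ (k : ℕ) *ᵥ c)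

theorem krylovSubspace_mono (T : Matrix m m K) (c : m → K) {N N' : ℕ} (h : N ≤ N') :
    krylovSubspace T c N ≤ krylovSubspace T c N' :=
  Submodule.span_mono <| Set.range_subset_iff.2 fun k => ⟨Fin.castLE h k, rfl⟩

theorem aeval_mulVec_mem_krylovSubspace (T : Matrix m m K) (c : m → K) {s : K[X]} {N : ℕ}
    (hs : s.natDegree < N) : aeval T s *ᵥ c ∈ krylovSubspace T c N := by
  rw [aeval_eq_sum_range' hs, sum_mulVec]
  refine Submodule.sum_mem _ fun k hk => ?_
  rw [smul_mulVec]
  exact Submodule.smul_mem _ _ (Submodule.subset_span ⟨⟨k, Finset.mem_range.1 hk⟩, rfl⟩)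

theorem exists_inv_eq_aeval_natDegree_lt [Nonempty m] {T : Matrix m m K} (hT : IsUnit T) :
    ∃ s : K[X], s.natDegree < (minpoly K T).natDegree ∧ T⁻¹ = aeval T s := by
  set μ := minpoly K T
  have hμ0 : μ.coeff 0 ≠ 0 := by
    simpa [μ, minpoly_toLin'] using
      LinearMap.minpoly_coeff_zero_of_injective (f := toLin' T) (mulVec_injective_of_isUnit hT)
  refine ⟨-(μ.coeff 0)⁻¹ • μ.divX, ?_, ?_⟩
  · have hpos : 0 < μ.natDegree := minpoly.natDegree_pos T.isIntegral
    calc _ ≤ μ.divX.natDegree := natDegree_smul_le _ _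
      _ < μ.natDegree := by rw [natDegree_divX_eq_natDegree_tsub_one]; omega
  · have hμT : aeval T μ.divX * T = -(μ.coeff 0 • 1) := by
      have := congrArg (aeval T) (divX_mul_X_add μ)
      rw [minpoly.aeval, map_add, map_mul, aeval_X, aeval_C, Algebra.algebraMap_eq_smul_one]
        at this
      exact eq_neg_of_add_eq_zero_left this
    refine inv_eq_left_inv ?_
    rw [map_smul, smul_mul_assoc, hμT, smul_neg, neg_smul, neg_neg, smul_smul,
      inv_mul_cancel₀ hμ0, one_smul]

theorem inv_mulVec_mem_krylovSubspace {T : Matrix m m K} (hT : IsUnit T) (c : m → K) :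
    T⁻¹ *ᵥ c ∈ krylovSubspace T c (minpoly K T).natDegree := by
  -- For empty `m` the matrix ring is trivial, `minpoly K T = 1` and the Krylov subspace is `⊥`.
  cases isEmpty_or_nonempty m
  · rw [Subsingleton.elim (T⁻¹ *ᵥ c) 0]
    exact zero_mem _
  · obtain ⟨s, hs, hinv⟩ := exists_inv_eq_aeval_natDegree_lt hT
    exact hinv ▸ aeval_mulVec_mem_krylovSubspace T c hs

end Field

end Matrix

/-- Any preconditioned matrix `T = ℳᵢ⁻¹𝒜` with block structure `[[I_p, Ψ], [0, Φ]]`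
(`Φ` of size `(n+q)×(n+q)`) has minimal polynomial of degree at most `n + q + 1`;
consequently (GMRES termination in exact arithmetic) if `T` is invertible then for
every right-hand side `c`, the solution `T⁻¹c` lies in the Krylov subspace
spanned by `c, Tc, …, T^{n+q}c`. -/
theorem stmt_14 {p n q : ℕ} (Ψ : Matrix (Fin p) (Fin n ⊕ Fin q) ℝ)
    (Φ : Matrix (Fin n ⊕ Fin q) (Fin n ⊕ Fin q) ℝ)
    (T : Matrix (Fin p ⊕ (Fin n ⊕ Fin q)) (Fin p ⊕ (Fin n ⊕ Fin q)) ℝ)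
    (hT : T = fromBlocks 1 Ψ 0 Φ) :
    (minpoly ℝ T).natDegree ≤ n + q + 1 ∧
      (IsUnit T.det → ∀ c : Fin p ⊕ (Fin n ⊕ Fin q) → ℝ,
        T⁻¹ *ᵥ c ∈ Submodule.span ℝ
          (Set.range fun k : Fin (n + q + 1) => (T ^ (k : ℕ)) *ᵥ c)) := by
  have hdeg : (minpoly ℝ T).natDegree ≤ n + q + 1 := by
    simpa [hT] using natDegree_minpoly_fromBlocks_one_zero_le Ψ Φ
  refine ⟨hdeg, fun hdet c => ?_⟩
  exact krylovSubspace_mono T c hdeg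
    (inv_mulVec_mem_krylovSubspace ((isUnit_iff_isUnit_det T).2 hdet) c)
end
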